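/- Let μ be a nontrivial probability measure on the unit circle with monic orthogonal polynomials Φ_n, and fix λ > 0. Suppose (a) μ has normal L²-derivative behavior, and (b) μ is in the Szegő class, i.e., lim_{n→∞} ‖Φ_n‖_{L²(dμ)} > 0. Then (i) σ_n² / ‖Φ_n‖²_{L²(dμ)} → 1 + λ as n → ∞, and (ii) ‖S_n − Φ_n‖²_{S,n} → 0 as n → ∞, where σ_n and S_n are the minimal Sobolev norm and the Sobolev minimizer among monic polynomials of degree n. -/

import Mathlib

open MeasureTheory Polynomial Filter Topology ComplexConjugate

noncomputable section

/-- The reversed (Szegő `*`-transformed) polynomial of a degree-`n` polynomial: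
`P*(z) = z^n conj(P(1/conj z))`, i.e. the coefficients are conjugated and reversed. -/
def starPoly (n : ℕ) (P : Polynomial ℂ) : Polynomial ℂ :=
  (P.map (starRingEnd ℂ)).reflect n

/-- The `L²(dμ)` norm of a polynomial. -/
def l2norm (μ : Measure ℂ) (P : Polynomial ℂ) : ℝ :=
  (∫ z, ‖P.eval z‖ ^ 2 ∂μ) ^ (1 / 2 : ℝ)

/-- `φ` is the sequence of orthonormal polynomials for the measure `μ`:
`φ n` has degree `n`, a positive (real) leading coefficient, and the family
is orthonormal in `L²(dμ)`. -/
structure IsOPUC (μ : Measure ℂ) (φ : ℕ → Polynomial ℂ) : Prop where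
  deg : ∀ n : ℕ, (φ n).degree = n
  lead_re_pos : ∀ n : ℕ, 0 < ((φ n).leadingCoeff).re
  lead_im_zero : ∀ n : ℕ, ((φ n).leadingCoeff).im = 0
  orth : ∀ m n : ℕ,
    ∫ z, conj ((φ m).eval z) * (φ n).eval z ∂μ = if m = n then 1 else 0

/-- The monic orthogonal polynomials `Φ_n` associated to the orthonormal ones. -/
def monicOP (φ : ℕ → Polynomial ℂ) (n : ℕ) : Polynomial ℂ :=
  Polynomial.C ((φ n).leadingCoeff)⁻¹ * φ n

/-- The Verblunsky coefficients `α_n = -conj (Φ_{n+1}(0))`. -/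
def verblunsky (φ : ℕ → Polynomial ℂ) (n : ℕ) : ℂ :=
  -conj ((monicOP φ (n + 1)).eval 0)

/-- The measure lives on the unit circle `∂𝔻`. -/
def OnCircle (μ : Measure ℂ) : Prop := μ (Metric.sphere (0 : ℂ) 1)ᶜ = 0

/-- The measure is nontrivial: it is not supported on any finite set
(equivalently, its support is infinite). -/
def NontrivialSupport (μ : Measure ℂ) : Prop :=
  ∀ s : Finset ℂ, μ ((↑s : Set ℂ))ᶜ ≠ 0

/-- `μ` has normal `L²`-derivative behavior: `‖φ_n'‖_{L²(dμ)} / n → 1`. -/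
def NormalBehavior (μ : Measure ℂ) (φ : ℕ → Polynomial ℂ) : Prop :=
  Tendsto (fun n : ℕ => l2norm μ (derivative (φ n)) / n) atTop (𝓝 1)

/-- The squared Sobolev norm `‖P‖²_{S,n} = ∫|P|²dμ + (λ/n²)∫|P'|²dμ`. -/
def sobNormSq (μ : Measure ℂ) (lam : ℝ) (n : ℕ) (P : Polynomial ℂ) : ℝ :=
  (∫ z, ‖P.eval z‖ ^ 2 ∂μ) + lam / (n : ℝ) ^ 2 * ∫ z, ‖(derivative P).eval z‖ ^ 2 ∂μ

/-! Write `a_n = ‖Φ_n‖²`. Since `Φ_n` minimizes `‖P‖²` among monic `P` of degree `n` and `P'/n`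
is monic of degree `n - 1`, every monic `P` of degree `n` has `‖P‖²_{S,n} ≥ a_n + λ a_{n-1}`,
while `‖Φ_n‖²_{S,n} = a_n (1 + λ ‖φ_n'‖² / n²)`. Divided by `a_n`, both bounds tend to `1 + λ`:
the lower one because `a_n` has a positive limit, the upper one by normal `L²`-derivative
behavior. For (ii), the parallelogram law and minimality of `S_n` at the midpoint
`(S_n + Φ_n)/2` give `‖S_n - Φ_n‖²_{S,n} ≤ 2 ‖Φ_n‖²_{S,n} - 2 σ_n²`, which is `o(a_n)` by (i). -/

def l2normSq (μ : Measure ℂ) (P : ℂ[X]) : ℝ := ∫ z, ‖P.eval z‖ ^ 2 ∂μ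

theorem l2normSq_nonneg (μ : Measure ℂ) (P : ℂ[X]) : 0 ≤ l2normSq μ P :=
  integral_nonneg fun _ => by positivity

theorem l2norm_sq (μ : Measure ℂ) (P : ℂ[X]) : l2norm μ P ^ 2 = l2normSq μ P := by
  change (l2normSq μ P ^ (1 / 2 : ℝ)) ^ 2 = l2normSq μ P
  rw [← Real.rpow_natCast, ← Real.rpow_mul (l2normSq_nonneg μ P)]
  norm_num

theorem l2normSq_C_mul (μ : Measure ℂ) (c : ℂ) (P : ℂ[X]) :
    l2normSq μ (C c * P) = ‖c‖ ^ 2 * l2normSq μ P := by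
  simp only [l2normSq, eval_mul, eval_C, norm_mul, mul_pow]
  exact integral_const_mul _ _


theorem sobNormSq_eq (μ : Measure ℂ) (lam : ℝ) (n : ℕ) (P : ℂ[X]) :
    sobNormSq μ lam n P = l2normSq μ P + lam / (n : ℝ) ^ 2 * l2normSq μ (derivative P) := rfl

theorem sobNormSq_nonneg (μ : Measure ℂ) {lam : ℝ} (hlam : 0 ≤ lam) (n : ℕ) (P : ℂ[X]) :
    0 ≤ sobNormSq μ lam n P :=
  add_nonneg (l2normSq_nonneg μ P) (mul_nonneg (by positivity) (l2normSq_nonneg μ _))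

theorem sobNormSq_C_mul (μ : Measure ℂ) (lam : ℝ) (n : ℕ) (c : ℂ) (P : ℂ[X]) :
    sobNormSq μ lam n (C c * P) = ‖c‖ ^ 2 * sobNormSq μ lam n P := by
  rw [sobNormSq_eq, sobNormSq_eq, derivative_C_mul, l2normSq_C_mul, l2normSq_C_mul]
  ring

namespace OnCircle

variable {μ : Measure ℂ} [IsFiniteMeasure μ]

theorem integrable_of_continuous (hc : OnCircle μ) {E : Type*} [NormedAddCommGroup E]
    {f : ℂ → E} (hf : Continuous f) : Integrable f μ := by
  have h := hf.continuousOn.integrableOn_compact (μ := μ) (isCompact_sphere (0 : ℂ) 1)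
  have hae : ∀ᵐ z ∂μ, z ∈ Metric.sphere (0 : ℂ) 1 := mem_ae_iff.mpr hc
  rwa [IntegrableOn, Measure.restrict_eq_self_of_ae_mem hae] at h

theorem integrable_norm_eval_sq (hc : OnCircle μ) (P : ℂ[X]) :
    Integrable (fun z => ‖P.eval z‖ ^ 2) μ :=
  hc.integrable_of_continuous (P.continuous.norm.pow 2)

theorem integrable_conj_eval_mul_eval (hc : OnCircle μ) (P Q : ℂ[X]) :
    Integrable (fun z => conj (P.eval z) * Q.eval z) μ :=
  hc.integrable_of_continuous ((Complex.continuous_conj.comp P.continuous).mul Q.continuous)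

theorem l2normSq_add (hc : OnCircle μ) (P Q : ℂ[X]) :
    l2normSq μ (P + Q)
      = l2normSq μ P + 2 * (∫ z, conj (P.eval z) * Q.eval z ∂μ).re + l2normSq μ Q := by
  have hPQ := hc.integrable_conj_eval_mul_eval P Q
  have hre_int : Integrable (fun z => 2 * (conj (P.eval z) * Q.eval z).re) μ :=
    hPQ.re.const_mul 2
  have hre : ∫ z, 2 * (conj (P.eval z) * Q.eval z).re ∂μ
      = 2 * (∫ z, conj (P.eval z) * Q.eval z ∂μ).re := by
    rw [integral_const_mul]
    exact congrArg _ (integral_re hPQ)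
  have hP := hc.integrable_norm_eval_sq P
  rw [← hre, l2normSq, l2normSq, l2normSq, ← integral_add hP hre_int,
    ← integral_add (hP.fun_add hre_int) (hc.integrable_norm_eval_sq Q)]
  refine integral_congr_ae (Eventually.of_forall fun z => ?_)
  simpa [RCLike.inner_apply, mul_comm] using norm_add_sq (𝕜 := ℂ) (P.eval z) (Q.eval z)

theorem l2normSq_sub_add_l2normSq_add (hc : OnCircle μ) (P Q : ℂ[X]) :
    l2normSq μ (P - Q) + l2normSq μ (P + Q) = 2 * l2normSq μ P + 2 * l2normSq μ Q := by
  simp only [l2normSq]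
  rw [← integral_add (hc.integrable_norm_eval_sq _) (hc.integrable_norm_eval_sq _),
    ← integral_const_mul, ← integral_const_mul,
    ← integral_add ((hc.integrable_norm_eval_sq _).const_mul 2)
      ((hc.integrable_norm_eval_sq _).const_mul 2)]
  refine integral_congr_ae (Eventually.of_forall fun z => ?_)
  simp only [eval_sub, eval_add]
  linarith [parallelogram_law_with_norm ℂ (P.eval z) (Q.eval z)]

theorem sobNormSq_sub_add_sobNormSq_add (hc : OnCircle μ) (lam : ℝ) (n : ℕ) (P Q : ℂ[X]) :
    sobNormSq μ lam n (P - Q) + sobNormSq μ lam n (P + Q)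
      = 2 * sobNormSq μ lam n P + 2 * sobNormSq μ lam n Q := by
  have h₀ := hc.l2normSq_sub_add_l2normSq_add P Q
  have h₁ := hc.l2normSq_sub_add_l2normSq_add (derivative P) (derivative Q)
  simp only [sobNormSq_eq, derivative_sub, derivative_add]
  linear_combination h₀ + lam / (n : ℝ) ^ 2 * h₁

end OnCircle

theorem Polynomial.Monic.add_smul_sub {R : Type*} [Ring R] {P Q : R[X]} (hP : P.Monic)
    (hQ : Q.Monic) (hd : Q.degree = P.degree) (c : R) :
    (P + c • (Q - P)).Monic ∧ (P + c • (Q - P)).degree = P.degree := by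
  nontriviality R
  have hlt : (c • (Q - P)).degree < P.degree :=
    (degree_smul_le c _).trans_lt <| (degree_sub_lt_left hd hQ.ne_zero
      (hQ.leadingCoeff.trans hP.leadingCoeff.symm)).trans_eq hd
  exact ⟨hP.add_of_left hlt, degree_add_eq_left_of_degree_lt hlt⟩

/-- Minimality of `S` at the midpoint `(S + P)/2`, combined with the parallelogram law. -/
theorem OnCircle.sobNormSq_sub_le_of_forall_le {μ : Measure ℂ} [IsFiniteMeasure μ]
    (hc : OnCircle μ) (lam : ℝ) (n : ℕ) {S P : ℂ[X]} (hS : S.Monic) (hP : P.Monic)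
    (hd : S.degree = P.degree)
    (hmin : ∀ Q : ℂ[X], Q.Monic → Q.degree = P.degree →
      sobNormSq μ lam n S ≤ sobNormSq μ lam n Q) :
    sobNormSq μ lam n (S - P) ≤ 2 * sobNormSq μ lam n P - 2 * sobNormSq μ lam n S := by
  obtain ⟨hMm, hMd⟩ := hP.add_smul_sub hS hd (1 / 2 : ℂ)
  have hsum : S + P = C 2 * (P + (1 / 2 : ℂ) • (S - P)) := by
    rw [smul_eq_C_mul, mul_add, ← mul_assoc, ← C_mul, map_ofNat C 2]
    norm_num
    ring
  have h := hc.sobNormSq_sub_add_sobNormSq_add lam n S P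
  rw [hsum, sobNormSq_C_mul] at h
  norm_num at h
  linarith [hmin _ hMm hMd]

theorem tendsto_add_mul_pred_div {a : ℕ → ℝ} {L : ℝ} (ha : Tendsto a atTop (𝓝 L))
    (hL : L ≠ 0) (c : ℝ) : Tendsto (fun n => (a n + c * a (n - 1)) / a n) atTop (𝓝 (1 + c)) := by
  have h := (ha.add ((ha.comp (tendsto_sub_atTop_nat 1)).const_mul c)).div ha hL
  rwa [show (L + c * L) / L = 1 + c by field_simp] at h

namespace IsOPUC

variable {μ : Measure ℂ} {φ : ℕ → ℂ[X]}

theorem leadingCoeff_ne_zero (hφ : IsOPUC μ φ) (n : ℕ) : (φ n).leadingCoeff ≠ 0 :=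
  fun h => (hφ.lead_re_pos n).ne' (by rw [h, Complex.zero_re])

theorem monicOP_monic (hφ : IsOPUC μ φ) (n : ℕ) : (monicOP φ n).Monic := by
  rw [Monic, monicOP, leadingCoeff_mul, leadingCoeff_C,
    inv_mul_cancel₀ (hφ.leadingCoeff_ne_zero n)]

theorem monicOP_degree (hφ : IsOPUC μ φ) (n : ℕ) : (monicOP φ n).degree = n := by
  rw [monicOP, degree_C_mul (inv_ne_zero (hφ.leadingCoeff_ne_zero n)), hφ.deg n]

variable [IsFiniteMeasure μ]

/-- `φ_0, …, φ_{n-1}` span the polynomials of degree `< n`. -/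
theorem integral_conj_mul_eq_zero_of_degree_lt (hc : OnCircle μ) (hφ : IsOPUC μ φ) {n : ℕ}
    {Q : ℂ[X]} (hQ : Q.degree < n) : ∫ z, conj ((φ n).eval z) * Q.eval z ∂μ = 0 := by
  have hspan : Q ∈ Submodule.span ℂ (φ '' Set.Iio n) := by
    rw [show φ = ⇑(⟨φ, hφ.deg⟩ : Sequence ℂ) from rfl,
      Sequence.span_degreeLT _ fun i _ => (hφ.leadingCoeff_ne_zero i).isUnit]
    exact mem_degreeLT.mpr hQ
  clear hQ
  induction hspan using Submodule.span_induction with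
  | mem P hP =>
    obtain ⟨i, hi, rfl⟩ := hP
    rw [hφ.orth, if_neg (Set.mem_Iio.mp hi).ne']
  | zero => simp
  | add P R _ _ hP hR =>
    simp only [eval_add, mul_add]
    rw [integral_add (hc.integrable_conj_eval_mul_eval _ _) (hc.integrable_conj_eval_mul_eval _ _),
      hP, hR, add_zero]
  | smul c P _ hP =>
    simp only [eval_smul, smul_eq_mul, mul_left_comm _ c]
    rw [integral_const_mul, hP, mul_zero]

theorem integral_conj_monicOP_mul_eq_zero_of_degree_lt (hc : OnCircle μ) (hφ : IsOPUC μ φ)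
    {n : ℕ} {Q : ℂ[X]} (hQ : Q.degree < n) :
    ∫ z, conj ((monicOP φ n).eval z) * Q.eval z ∂μ = 0 := by
  simp only [monicOP, eval_mul, eval_C, map_mul, mul_assoc]
  rw [integral_const_mul, hφ.integral_conj_mul_eq_zero_of_degree_lt hc hQ, mul_zero]

theorem l2normSq_eq_one (hc : OnCircle μ) (hφ : IsOPUC μ φ) (n : ℕ) :
    l2normSq μ (φ n) = 1 := by
  have hre : ∫ z, (conj ((φ n).eval z) * (φ n).eval z).re ∂μ
      = (∫ z, conj ((φ n).eval z) * (φ n).eval z ∂μ).re :=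
    integral_re (hc.integrable_conj_eval_mul_eval _ _)
  have h := congrArg Complex.re (hφ.orth n n)
  rw [if_pos rfl, Complex.one_re, ← hre] at h
  rw [← h]
  refine integral_congr_ae (Eventually.of_forall fun z => ?_)
  simp [Complex.conj_mul', ← Complex.ofReal_pow]

theorem l2normSq_monicOP_pos (hc : OnCircle μ) (hφ : IsOPUC μ φ) (n : ℕ) :
    0 < l2normSq μ (monicOP φ n) := by
  rw [monicOP, l2normSq_C_mul, hφ.l2normSq_eq_one hc, mul_one]
  exact pow_pos (norm_pos_iff.mpr (inv_ne_zero (hφ.leadingCoeff_ne_zero n))) 2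

/-- Pythagoras: `P - Φ_n` has degree `< n`, hence is orthogonal to `Φ_n`. -/
theorem l2normSq_monicOP_le (hc : OnCircle μ) (hφ : IsOPUC μ φ) {n : ℕ} {P : ℂ[X]}
    (hP : P.Monic) (hPd : P.degree = n) : l2normSq μ (monicOP φ n) ≤ l2normSq μ P := by
  have hlt : (P - monicOP φ n).degree < n :=
    hPd ▸ degree_sub_lt_left (hPd.trans (hφ.monicOP_degree n).symm) hP.ne_zero
      (hP.leadingCoeff.trans (hφ.monicOP_monic n).leadingCoeff.symm)
  have h := hc.l2normSq_add (monicOP φ n) (P - monicOP φ n)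
  rw [add_sub_cancel, hφ.integral_conj_monicOP_mul_eq_zero_of_degree_lt hc hlt] at h
  rw [h]
  simpa using l2normSq_nonneg μ (P - monicOP φ n)

/-- `P' / n` is monic of degree `n - 1`. -/
theorem mul_l2normSq_monicOP_pred_le (hc : OnCircle μ) (hφ : IsOPUC μ φ) {n : ℕ}
    (hn : 1 ≤ n) {P : ℂ[X]} (hP : P.Monic) (hPd : P.degree = n) :
    (n : ℝ) ^ 2 * l2normSq μ (monicOP φ (n - 1)) ≤ l2normSq μ (derivative P) := by
  have hnat : P.natDegree = n := natDegree_eq_of_degree_eq_some hPd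
  have hn0 : (n : ℂ) ≠ 0 := Nat.cast_ne_zero.mpr (by omega)
  have hQm : (C (n : ℂ)⁻¹ * derivative P).Monic := by
    rw [Monic, leadingCoeff_mul, leadingCoeff_C, leadingCoeff_derivative, hP.leadingCoeff, hnat,
      one_mul, inv_mul_cancel₀ hn0]
  have hQd : (C (n : ℂ)⁻¹ * derivative P).degree = ↑(n - 1) := by
    rw [degree_C_mul (inv_ne_zero hn0), degree_derivative (by omega), hnat]
  have h := hφ.l2normSq_monicOP_le hc hQm hQd
  rw [l2normSq_C_mul, norm_inv, Complex.norm_natCast, inv_pow, ← div_eq_inv_mul,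
    le_div_iff₀ (by positivity)] at h
  linarith

theorem sobNormSq_monicOP (hc : OnCircle μ) (hφ : IsOPUC μ φ) (lam : ℝ) (n : ℕ) :
    sobNormSq μ lam n (monicOP φ n)
      = l2normSq μ (monicOP φ n) * (1 + lam * (l2norm μ (derivative (φ n)) / n) ^ 2) := by
  rw [sobNormSq_eq, div_pow, l2norm_sq, monicOP, derivative_C_mul, l2normSq_C_mul,
    l2normSq_C_mul, hφ.l2normSq_eq_one hc]
  ring

theorem add_mul_l2normSq_monicOP_pred_le_sobNormSq (hc : OnCircle μ) (hφ : IsOPUC μ φ)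
    {lam : ℝ} (hlam : 0 ≤ lam) {n : ℕ} (hn : 1 ≤ n) {P : ℂ[X]} (hP : P.Monic)
    (hPd : P.degree = n) :
    l2normSq μ (monicOP φ n) + lam * l2normSq μ (monicOP φ (n - 1))
      ≤ sobNormSq μ lam n P := by
  calc l2normSq μ (monicOP φ n) + lam * l2normSq μ (monicOP φ (n - 1))
      = l2normSq μ (monicOP φ n)
          + lam / (n : ℝ) ^ 2 * ((n : ℝ) ^ 2 * l2normSq μ (monicOP φ (n - 1))) := by
        field_simp
    _ ≤ sobNormSq μ lam n P := by
        rw [sobNormSq_eq]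
        gcongr
        · exact hφ.l2normSq_monicOP_le hc hP hPd
        · exact hφ.mul_l2normSq_monicOP_pred_le hc hn hP hPd

theorem tendsto_sobNormSq_monicOP_div (hc : OnCircle μ) (hφ : IsOPUC μ φ) (lam : ℝ)
    (hnormal : NormalBehavior μ φ) :
    Tendsto (fun n : ℕ => sobNormSq μ lam n (monicOP φ n) / l2normSq μ (monicOP φ n)) atTop
      (𝓝 (1 + lam)) := by
  have h : Tendsto (fun n : ℕ => 1 + lam * (l2norm μ (derivative (φ n)) / n) ^ 2) atTop
      (𝓝 (1 + lam * 1 ^ 2)) :=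
    tendsto_const_nhds.add ((hnormal.pow 2).const_mul lam)
  rw [one_pow, mul_one] at h
  refine h.congr fun n => ?_
  rw [hφ.sobNormSq_monicOP hc, mul_div_cancel_left₀ _ (hφ.l2normSq_monicOP_pos hc n).ne']

theorem tendsto_sobNormSq_minimizer_div (hc : OnCircle μ) (hφ : IsOPUC μ φ) {lam : ℝ}
    (hlam : 0 ≤ lam) (hnormal : NormalBehavior μ φ) {L : ℝ} (hL : L ≠ 0)
    (ha : Tendsto (fun n => l2normSq μ (monicOP φ n)) atTop (𝓝 L)) {S : ℕ → ℂ[X]}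
    (hS : ∀ n : ℕ, 1 ≤ n → (S n).Monic ∧ (S n).degree = n)
    (hmin : ∀ n : ℕ, 1 ≤ n → ∀ P : ℂ[X], P.Monic → P.degree = n →
      sobNormSq μ lam n (S n) ≤ sobNormSq μ lam n P) :
    Tendsto (fun n : ℕ => sobNormSq μ lam n (S n) / l2normSq μ (monicOP φ n)) atTop
      (𝓝 (1 + lam)) := by
  refine tendsto_of_tendsto_of_tendsto_of_le_of_le' (tendsto_add_mul_pred_div ha hL lam)
    (hφ.tendsto_sobNormSq_monicOP_div hc lam hnormal) ?_ ?_ <;>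
    filter_upwards [eventually_ge_atTop 1] with n hn <;>
    refine div_le_div_of_nonneg_right ?_ (hφ.l2normSq_monicOP_pos hc n).le
  · exact hφ.add_mul_l2normSq_monicOP_pred_le_sobNormSq hc hlam hn (hS n hn).1 (hS n hn).2
  · exact hmin n hn _ (hφ.monicOP_monic n) (hφ.monicOP_degree n)

end IsOPUC

theorem stmt1_general (μ : Measure ℂ) [IsProbabilityMeasure μ] (hcirc : OnCircle μ)
    (φ : ℕ → Polynomial ℂ) (hφ : IsOPUC μ φ)
    (lam : ℝ) (hlam : 0 < lam)
    (hnormal : NormalBehavior μ φ)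
    (hszego : ∃ L > (0 : ℝ), Tendsto (fun n : ℕ => l2norm μ (monicOP φ n)) atTop (𝓝 L))
    (S : ℕ → Polynomial ℂ) (σ : ℕ → ℝ)
    (hSmonic : ∀ n : ℕ, 1 ≤ n → (S n).Monic ∧ (S n).degree = n)
    (hSmin : ∀ n : ℕ, 1 ≤ n → ∀ P : Polynomial ℂ, P.Monic → P.degree = n →
      sobNormSq μ lam n (S n) ≤ sobNormSq μ lam n P)
    (hσ : ∀ n : ℕ, 1 ≤ n → σ n = Real.sqrt (sobNormSq μ lam n (S n))) :
    Tendsto (fun n : ℕ => σ n ^ 2 / l2norm μ (monicOP φ n) ^ 2) atTop (𝓝 (1 + lam)) ∧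
    Tendsto (fun n : ℕ => sobNormSq μ lam n (S n - monicOP φ n)) atTop (𝓝 0) := by
  obtain ⟨L, hL, hlim⟩ := hszego
  have ha : Tendsto (fun n => l2normSq μ (monicOP φ n)) atTop (𝓝 (L ^ 2)) := by
    simpa only [l2norm_sq] using hlim.pow 2
  have hS := hφ.tendsto_sobNormSq_minimizer_div hcirc hlam.le hnormal (pow_ne_zero 2 hL.ne') ha
    hSmonic hSmin
  have hΦ := hφ.tendsto_sobNormSq_monicOP_div hcirc lam hnormal
  constructor
  · refine hS.congr' ?_
    filter_upwards [eventually_ge_atTop 1] with n hn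
    rw [hσ n hn, Real.sq_sqrt (sobNormSq_nonneg μ hlam.le n _), l2norm_sq]
  · have hgap := ((hΦ.sub hS).mul ha).const_mul 2
    rw [sub_self, zero_mul, mul_zero] at hgap
    refine squeeze_zero' (Eventually.of_forall fun n => sobNormSq_nonneg μ hlam.le n _) ?_ hgap
    filter_upwards [eventually_ge_atTop 1] with n hn
    obtain ⟨hm, hd⟩ := hSmonic n hn
    have ha_ne := (hφ.l2normSq_monicOP_pos hcirc n).ne'
    rw [sub_mul, div_mul_cancel₀ _ ha_ne, div_mul_cancel₀ _ ha_ne, mul_sub]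
    refine hcirc.sobNormSq_sub_le_of_forall_le lam n hm (hφ.monicOP_monic n)
      (hd.trans (hφ.monicOP_degree n).symm) fun Q hQ hQd => ?_
    exact hSmin n hn Q hQ (hQd.trans (hφ.monicOP_degree n))

/-- For a normal measure in the Szegő class:
`σ_n²/‖Φ_n‖² → 1 + λ` and `‖S_n − Φ_n‖²_{S,n} → 0`. -/
theorem stmt1 (μ : Measure ℂ) [IsProbabilityMeasure μ] (hcirc : OnCircle μ)
    (hnt : NontrivialSupport μ) (φ : ℕ → Polynomial ℂ) (hφ : IsOPUC μ φ)
    (lam : ℝ) (hlam : 0 < lam)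
    (hnormal : NormalBehavior μ φ)
    (hszego : ∃ L > (0 : ℝ), Tendsto (fun n : ℕ => l2norm μ (monicOP φ n)) atTop (𝓝 L))
    (S : ℕ → Polynomial ℂ) (σ : ℕ → ℝ)
    (hSmonic : ∀ n : ℕ, 1 ≤ n → (S n).Monic ∧ (S n).degree = n)
    (hSmin : ∀ n : ℕ, 1 ≤ n → ∀ P : Polynomial ℂ, P.Monic → P.degree = n →
      sobNormSq μ lam n (S n) ≤ sobNormSq μ lam n P)
    (hσ : ∀ n : ℕ, 1 ≤ n → σ n = Real.sqrt (sobNormSq μ lam n (S n))) :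
    Tendsto (fun n : ℕ => σ n ^ 2 / l2norm μ (monicOP φ n) ^ 2) atTop (𝓝 (1 + lam)) ∧
    Tendsto (fun n : ℕ => sobNormSq μ lam n (S n - monicOP φ n)) atTop (𝓝 0) :=
  stmt1_general μ hcirc φ hφ lam hlam hnormal hszego S σ hSmonic hSmin hσ
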